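/- The rational function F(x,y) = 1/((1−3x)(1−y−3x+3x^2)) has diagonal Taylor coefficients c_{n,n} = 9^n, where F(x,y) = ∑_{m,n≥0} c_{m,n} x^m y^n. -/

import Mathlib

/-!
Write `x = X 0`, `y = X 1`, `U = 1 - 3x` and `A = 1 - 3x + 3x²`, so that `F = 1 / (U (A - y))`.
Comparing coefficients of `yⁿ` in `F U (A - y) = 1` shows that the coefficient of `yⁿ` in `F`, a
power series in `x`, is `U⁻¹ A⁻⁽ⁿ⁺¹⁾`, so the claim is `[xⁿ] U⁻¹ A⁻⁽ⁿ⁺¹⁾ = 9ⁿ`. Two polynomial identities drive an induction on `n`: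
`U³ = 1 - 9xA` gives `U⁻¹ A⁻⁽ⁿ⁺²⁾ = 9x · U⁻¹ A⁻⁽ⁿ⁺¹⁾ + U² A⁻⁽ⁿ⁺²⁾`, and `U² = A + xA'` gives
`(s + 1) U² A⁻⁽ˢ⁺²⁾ = (s + 1) A⁻⁽ˢ⁺¹⁾ - x (A⁻⁽ˢ⁺¹⁾)'`, whose coefficient of `xˢ⁺¹` vanishes because
`x d/dx` multiplies the coefficient of `xᵐ` by `m`.
-/

namespace PowerSeries

theorem coeff_X_mul_derivative {R : Type*} [CommSemiring R] (f : R⟦X⟧) (n : ℕ) :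
    coeff n (X * d⁄dX R f) = n * coeff n f := by
  cases n with
  | zero => simp
  | succ n => rw [coeff_succ_X_mul, coeff_derivative, mul_comm]; push_cast; rfl

section CharZeroField

variable {k : Type*} [Field k] [CharZero k]

theorem coeff_succ_add_X_mul_derivative_mul_inv_pow {A : k⟦X⟧} (hA : constantCoeff A ≠ 0)
    (s : ℕ) : coeff (s + 1) ((A + X * d⁄dX k A) * A⁻¹ ^ (s + 2)) = 0 := by
  have hinv : A * A⁻¹ = 1 := PowerSeries.mul_inv_cancel A hA
  have hderiv : d⁄dX k (A⁻¹ ^ (s + 1)) = -(C ((s : k) + 1) * (d⁄dX k A * A⁻¹ ^ (s + 2))) := by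
    rw [derivative_pow, derivative_inv', map_add, map_one, map_natCast]
    push_cast
    ring
  have hsplit : C ((s : k) + 1) * ((A + X * d⁄dX k A) * A⁻¹ ^ (s + 2))
      = C ((s : k) + 1) * A⁻¹ ^ (s + 1) - X * d⁄dX k (A⁻¹ ^ (s + 1)) := by
    rw [hderiv]
    linear_combination C ((s : k) + 1) * A⁻¹ ^ (s + 1) * hinv
  have h := congrArg (coeff (s + 1)) hsplit
  rw [coeff_C_mul, map_sub, coeff_C_mul, coeff_X_mul_derivative,
    sub_eq_zero.mpr (by push_cast; rfl)] at h
  exact (mul_eq_zero.mp h).resolve_left (Nat.cast_add_one_ne_zero s)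

theorem coeff_inv_mul_inv_pow_eq_pow {U A : k⟦X⟧} (c : k) (hU2 : U ^ 2 = A + X * d⁄dX k A)
    (hU3 : U ^ 3 = 1 - C c * X * A) (n : ℕ) : coeff n (U⁻¹ * A⁻¹ ^ (n + 1)) = c ^ n := by
  have hU0 : constantCoeff U ^ 3 = 1 := by simpa using congrArg constantCoeff hU3
  have hA0 : constantCoeff A = constantCoeff U ^ 2 := by
    simpa using (congrArg constantCoeff hU2).symm
  have hU : constantCoeff U ≠ 0 := by rintro h; simp [h] at hU0
  have hA : constantCoeff A ≠ 0 := by rw [hA0]; exact pow_ne_zero 2 hU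
  induction n with
  | zero =>
    rw [coeff_zero_eq_constantCoeff_apply, map_mul, pow_one, constantCoeff_inv, constantCoeff_inv,
      hA0, ← mul_inv, ← pow_succ', hU0, inv_one, pow_zero]
  | succ n ih =>
    have hrec : U⁻¹ * A⁻¹ ^ (n + 2)
        = C c * (X * (U⁻¹ * A⁻¹ ^ (n + 1))) + (A + X * d⁄dX k A) * A⁻¹ ^ (n + 2) := by
      rw [← hU2]
      linear_combination (-(U⁻¹ * A⁻¹ ^ (n + 2))) * hU3
        + (C c * X * U⁻¹ * A⁻¹ ^ (n + 1)) * PowerSeries.mul_inv_cancel A hA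
        + (U ^ 2 * A⁻¹ ^ (n + 2)) * PowerSeries.mul_inv_cancel U hU
    rw [hrec, map_add, coeff_C_mul, coeff_succ_X_mul, ih,
      coeff_succ_add_X_mul_derivative_mul_inv_pow hA, add_zero, pow_succ']

end CharZeroField

end PowerSeries

namespace MvPowerSeries

open scoped Polynomial

section CommSemiring

variable {R : Type*} [CommSemiring R]

noncomputable def coeffX₁ (n : ℕ) : MvPowerSeries (Fin 2) R →ₗ[R] PowerSeries R where
  toFun G := PowerSeries.mk fun m => coeff (Finsupp.single 0 m + Finsupp.single 1 n) G
  map_add' G H := by ext; simp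
  map_smul' a G := by ext; simp

@[simp]
theorem coeff_coeffX₁ (m n : ℕ) (G : MvPowerSeries (Fin 2) R) :
    PowerSeries.coeff m (coeffX₁ n G) = coeff (Finsupp.single 0 m + Finsupp.single 1 n) G :=
  PowerSeries.coeff_mk m fun m => coeff (Finsupp.single 0 m + Finsupp.single 1 n) G

theorem coeffX₁_one (n : ℕ) :
    coeffX₁ n (1 : MvPowerSeries (Fin 2) R) = if n = 0 then 1 else 0 := by
  ext m
  rw [coeff_coeffX₁, coeff_one]
  split_ifs <;> simp_all [PowerSeries.coeff_one, Finsupp.ext_iff, Fin.forall_fin_two]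

theorem coeffX₁_mul_X_zero (n : ℕ) (G : MvPowerSeries (Fin 2) R) :
    coeffX₁ n (G * X 0) = coeffX₁ n G * PowerSeries.X := by
  ext m
  cases m with
  | zero =>
    rw [coeff_coeffX₁, X, coeff_mul_monomial, if_neg]
    · simp
    · simp [Finsupp.le_def, Fin.forall_fin_two]
  | succ m =>
    rw [PowerSeries.coeff_succ_mul_X, coeff_coeffX₁, coeff_coeffX₁, X, Finsupp.single_add,
      add_right_comm, coeff_add_mul_monomial, mul_one]

theorem coeffX₁_succ_mul_X_one (n : ℕ) (G : MvPowerSeries (Fin 2) R) :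
    coeffX₁ (n + 1) (G * X 1) = coeffX₁ n G := by
  ext m
  rw [coeff_coeffX₁, coeff_coeffX₁, X, Finsupp.single_add, ← add_assoc, coeff_add_mul_monomial,
    mul_one]

theorem coeffX₁_zero_mul_X_one (G : MvPowerSeries (Fin 2) R) : coeffX₁ 0 (G * X 1) = 0 := by
  ext m
  rw [coeff_coeffX₁, X, coeff_mul_monomial, if_neg]
  · simp
  · simp [Finsupp.le_def, Fin.forall_fin_two]

theorem coeffX₁_mul_aeval_X_zero (n : ℕ) (G : MvPowerSeries (Fin 2) R) (p : R[X]) :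
    coeffX₁ n (G * Polynomial.aeval (X 0) p) = coeffX₁ n G * (p : PowerSeries R) := by
  induction p using Polynomial.induction_on with
  | C a =>
    rw [Polynomial.aeval_C, Polynomial.coe_C, mul_comm, ← Algebra.smul_def, map_smul,
      PowerSeries.smul_eq_C_mul, mul_comm]
  | add p q hp hq => rw [map_add, mul_add, map_add, hp, hq, Polynomial.coe_add, mul_add]
  | monomial i a h =>
    rw [pow_succ, ← mul_assoc, Polynomial.aeval_mul, Polynomial.aeval_X, ← mul_assoc,
      coeffX₁_mul_X_zero, h, Polynomial.coe_mul _ Polynomial.X, Polynomial.coe_X, mul_assoc]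

end CommSemiring

theorem coeffX₁_mul_eq_one {R : Type*} [CommRing R] {F : MvPowerSeries (Fin 2) R} {u a : R[X]}
    (hF : F * (Polynomial.aeval (X 0) u * (Polynomial.aeval (X 0) a - X 1)) = 1) (n : ℕ) :
    coeffX₁ n F * ((u : PowerSeries R) * (a : PowerSeries R) ^ (n + 1)) = 1 := by
  have hrec (m : ℕ) : coeffX₁ m F * ((u * a : R[X]) : PowerSeries R)
      = coeffX₁ m 1 + coeffX₁ m (F * Polynomial.aeval (X 0) u * X 1) := by
    rw [← coeffX₁_mul_aeval_X_zero, ← map_add, ← hF, Polynomial.aeval_mul]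
    ring_nf
  induction n with
  | zero => simpa [coeffX₁_one, coeffX₁_zero_mul_X_one] using hrec 0
  | succ n ih =>
    have h := hrec (n + 1)
    rw [coeffX₁_one, if_neg n.succ_ne_zero, zero_add, coeffX₁_succ_mul_X_one,
      coeffX₁_mul_aeval_X_zero, Polynomial.coe_mul] at h
    linear_combination (a : PowerSeries R) ^ (n + 1) * h + ih

theorem coeffX₁_eq_inv_mul_inv_pow {k : Type*} [Field k] {F : MvPowerSeries (Fin 2) k}
    {u a : k[X]} (hu : u.coeff 0 ≠ 0) (ha : a.coeff 0 ≠ 0)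
    (hF : F * (Polynomial.aeval (X 0) u * (Polynomial.aeval (X 0) a - X 1)) = 1) (n : ℕ) :
    coeffX₁ n F = (u : PowerSeries k)⁻¹ * (a : PowerSeries k)⁻¹ ^ (n + 1) := by
  have hu' : (u : PowerSeries k) * (u : PowerSeries k)⁻¹ = 1 :=
    PowerSeries.mul_inv_cancel _ (by simpa using hu)
  have ha' : ((a : PowerSeries k) * (a : PowerSeries k)⁻¹) ^ (n + 1) = 1 := by
    rw [PowerSeries.mul_inv_cancel _ (by simpa using ha), one_pow]
  linear_combination
    ((u : PowerSeries k)⁻¹ * (a : PowerSeries k)⁻¹ ^ (n + 1)) * coeffX₁_mul_eq_one hF n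
      - coeffX₁ n F * ((a : PowerSeries k) * (a : PowerSeries k)⁻¹) ^ (n + 1) * hu'
      - coeffX₁ n F * ha'

end MvPowerSeries

open MvPowerSeries

/-- Gessel's Monthly problem #11757: the diagonal Taylor coefficients of
`F(x,y) = 1/((1−3x)(1−y−3x+3x²))` are `9^n`. -/
theorem gessel_diagonal (F : MvPowerSeries (Fin 2) ℚ)
    (hF : F * ((1 - 3 * X 0) * (1 - X 1 - 3 * X 0 + 3 * (X 0) ^ 2)) = 1) :
    ∀ n : ℕ, MvPowerSeries.coeff (R := ℚ) (Finsupp.single 0 n + Finsupp.single 1 n) F = 9 ^ n := by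
  set u : Polynomial ℚ := 1 - 3 * Polynomial.X
  set a : Polynomial ℚ := 1 - 3 * Polynomial.X + 3 * Polynomial.X ^ 2
  have hF' : F * (Polynomial.aeval (X 0) u * (Polynomial.aeval (X 0) a - X 1)) = 1 := by
    rw [← hF]
    simp only [u, a, map_sub, map_add, map_mul, map_pow, map_one, map_ofNat, Polynomial.aeval_X]
    ring
  have hU : (u : PowerSeries ℚ) = 1 - 3 * PowerSeries.X := by
    rw [← Polynomial.eval₂_C_X_eq_coe]; simp [u]
  have hA : (a : PowerSeries ℚ) = 1 - 3 * PowerSeries.X + 3 * PowerSeries.X ^ 2 := by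
    rw [← Polynomial.eval₂_C_X_eq_coe]; simp [a]
  have h3 : PowerSeries.derivative ℚ 3 = 0 := by
    exact_mod_cast (PowerSeries.derivative ℚ).map_natCast 3
  intro n
  rw [← coeff_coeffX₁, coeffX₁_eq_inv_mul_inv_pow (by simp [u]) (by simp [a]) hF',
    PowerSeries.coeff_inv_mul_inv_pow_eq_pow 9]
  · rw [hU, hA]; simp [Derivation.leibniz_pow, h3]; ring
  · rw [hU, hA]; simp [map_ofNat]; ring
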